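/- arXiv:1209.2306 — 4 statements merged into one kernel-verified Lean document; each statement's English description precedes it below -/
import Mathlib

section
/- Let x¹, x², x³, u¹, u² : ℝ → ℝ be smooth with u¹(t) ≠ 0, u²(t) > 0 for all t, satisfying ẋ¹ = u¹, ẋ² = u², ẋ³ = sin(u¹/u²). Define y¹ = x³, ẑ² = u¹/u², y² = x² - x¹u²/u¹, ẑ³ = x¹u²/u¹, ẑ⁴ = ln(u²). Then the transformed functions satisfy the implicit equations ẏ¹ - sin(ẑ²) = 0, -ẏ²ẑ² + ẑ̇²ẑ³ = 0 (i.e. -(d/dt y²)ẑ² + (d/dt ẑ²)ẑ³ = 0), and ẏ² + (d/dt ẑ³) - e^{ẑ⁴} = 0. -/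
noncomputable section

open Real

/-- Along any smooth solution of `ẋ¹ = u¹`, `ẋ² = u²`, `ẋ³ = sin(u¹/u²)` with
`u¹(t) ≠ 0`, `u²(t) > 0`, the transformed functions `y¹ = x³`, `ẑ² = u¹/u²`,
`y² = x² - x¹u²/u¹`, `ẑ³ = x¹u²/u¹`, `ẑ⁴ = ln(u²)` satisfy the implicit
equations `ẏ¹ - sin(ẑ²) = 0`, `-ẏ²ẑ² + ẑ̇²ẑ³ = 0`, `ẏ² + ẑ̇³ - e^{ẑ⁴} = 0`. -/
theorem transformed_implicit_equations
    (x1 x2 x3 u1 u2 : ℝ → ℝ)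
    (hx1 : ContDiff ℝ (⊤ : ℕ∞) x1) (hx2 : ContDiff ℝ (⊤ : ℕ∞) x2) (hx3 : ContDiff ℝ (⊤ : ℕ∞) x3)
    (hu1 : ContDiff ℝ (⊤ : ℕ∞) u1) (hu2 : ContDiff ℝ (⊤ : ℕ∞) u2)
    (hu1ne : ∀ t, u1 t ≠ 0) (hu2pos : ∀ t, u2 t > 0)
    (hode1 : ∀ t, deriv x1 t = u1 t)
    (hode2 : ∀ t, deriv x2 t = u2 t)
    (hode3 : ∀ t, deriv x3 t = Real.sin (u1 t / u2 t)) :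
    let y1 : ℝ → ℝ := x3
    let z2 : ℝ → ℝ := fun t => u1 t / u2 t
    let y2 : ℝ → ℝ := fun t => x2 t - x1 t * u2 t / u1 t
    let z3 : ℝ → ℝ := fun t => x1 t * u2 t / u1 t
    let z4 : ℝ → ℝ := fun t => Real.log (u2 t)
    ∀ t : ℝ,
      (deriv y1 t - Real.sin (z2 t) = 0) ∧
      (-(deriv y2 t) * z2 t + deriv z2 t * z3 t = 0) ∧
      (deriv y2 t + deriv z3 t - Real.exp (z4 t) = 0) := by
  intro y1 z2 y2 z3 z4 t
  have hu2ne : u2 t ≠ 0 := (hu2pos t).ne'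
  have hdx1 : HasDerivAt x1 (u1 t) t := by
    rw [← hode1 t]
    exact (hx1.differentiable (by simp) t).hasDerivAt
  have hdx2 : HasDerivAt x2 (u2 t) t := by
    rw [← hode2 t]
    exact (hx2.differentiable (by simp) t).hasDerivAt
  have hdu1 : HasDerivAt u1 (deriv u1 t) t := (hu1.differentiable (by simp) t).hasDerivAt
  have hdu2 : HasDerivAt u2 (deriv u2 t) t := (hu2.differentiable (by simp) t).hasDerivAt
  set d1 := deriv u1 t
  set d2 := deriv u2 t
  have hz3 : HasDerivAt z3
      (((u1 t * u2 t + x1 t * d2) * u1 t - x1 t * u2 t * d1) / (u1 t) ^ 2) t :=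
    (hdx1.mul hdu2).div hdu1 (hu1ne t)
  have hz2 : HasDerivAt z2 ((d1 * u2 t - u1 t * d2) / (u2 t) ^ 2) t :=
    hdu1.div hdu2 hu2ne
  have hy2 : HasDerivAt y2
      (u2 t - ((u1 t * u2 t + x1 t * d2) * u1 t - x1 t * u2 t * d1) / (u1 t) ^ 2) t :=
    hdx2.sub hz3
  have ez2 : deriv z2 t = (d1 * u2 t - u1 t * d2) / (u2 t) ^ 2 := hz2.deriv
  have ez3 : deriv z3 t =
      ((u1 t * u2 t + x1 t * d2) * u1 t - x1 t * u2 t * d1) / (u1 t) ^ 2 := hz3.deriv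
  have ey2 : deriv y2 t =
      u2 t - ((u1 t * u2 t + x1 t * d2) * u1 t - x1 t * u2 t * d1) / (u1 t) ^ 2 := hy2.deriv
  clear_value d1 d2
  refine ⟨by simp [y1, z2, hode3 t], ?_, ?_⟩
  · rw [ey2, ez2]
    show -_ * (u1 t / u2 t) + _ * (x1 t * u2 t / u1 t) = 0
    field_simp [hu1ne t]
    ring_nf
  · rw [ey2, ez3]
    show _ - Real.exp (Real.log (u2 t)) = 0
    rw [Real.exp_log (hu2pos t)]
    ring
end
end

section
/- For the 1-form Φ = cos(u¹/u²)((u¹/u²)dx² - dx¹) + u²(dx³ - sin(u¹/u²)dt) on the domain u² ≠ 0, Φ lies in the first derived system of S₀ = span{dx¹ - u¹dt, dx² - u²dt, dx³ - sin(u¹/u²)dt}: Φ ∈ S₀ and dΦ ≡ 0 mod S₀, i.e. dΦ ∧ ω₀¹ ∧ ω₀² ∧ ω₀³ = 0. -/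
noncomputable section

open scoped BigOperators

/-- Coordinates `(t, x¹, x², x³, u¹, u²)` indexed by `0,…,5`. -/
abbrev E6 := Fin 6 → ℝ

def pr6 (i : Fin 6) : E6 →L[ℝ] ℝ := ContinuousLinearMap.proj i

/-- Exterior derivative of a 1-form evaluated on two vectors. -/
def dOne {E : Type*} [NormedAddCommGroup E] [NormedSpace ℝ E]
    (ω : E → E →L[ℝ] ℝ) (x v w : E) : ℝ :=
  fderiv ℝ ω x v w - fderiv ℝ ω x w v

def ω01 : E6 → E6 →L[ℝ] ℝ := fun x => pr6 1 - x 4 • pr6 0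
def ω02 : E6 → E6 →L[ℝ] ℝ := fun x => pr6 2 - x 5 • pr6 0
def ω03 : E6 → E6 →L[ℝ] ℝ := fun x => pr6 3 - Real.sin (x 4 / x 5) • pr6 0

/-- `Φ = cos(u¹/u²)((u¹/u²)dx² - dx¹) + u²(dx³ - sin(u¹/u²)dt)`. -/
def Φ : E6 → E6 →L[ℝ] ℝ := fun x =>
  Real.cos (x 4 / x 5) • ((x 4 / x 5) • pr6 2 - pr6 1) +
    x 5 • (pr6 3 - Real.sin (x 4 / x 5) • pr6 0)

/-- The 5-form `η ∧ a ∧ b ∧ c` (for a 2-form `η` and 1-forms `a,b,c`)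
evaluated on five vectors, up to a nonzero combinatorial factor. -/
def wedge2111 (η : E6 → E6 → E6 → ℝ) (a b c : E6 → E6 →L[ℝ] ℝ)
    (x : E6) (v : Fin 5 → E6) : ℝ :=
  ∑ σ : Equiv.Perm (Fin 5), ((Equiv.Perm.sign σ : ℤ) : ℝ) *
    η x (v (σ 0)) (v (σ 1)) * a x (v (σ 2)) * b x (v (σ 3)) * c x (v (σ 4))

/-!
With `s = u¹/u²` one has `Φ = -cos s · ω₀¹ + s cos s · ω₀² + u² · ω₀³`, and differentiating gives
`dΦ = sin s · ds ∧ ω₀¹ + (cos s - s sin s) · ds ∧ ω₀² + du² ∧ ω₀³`.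
Each term of `dΦ` has a factor `ω₀ⁱ`, so its wedge with `ω₀¹ ∧ ω₀² ∧ ω₀³` is an alternating sum of
products with a repeated factor, i.e. a determinant with two equal columns, and vanishes.
-/

open Finset

theorem sum_sign_mul_prod_eq_zero_of_eq {ι α R : Type*} [Fintype ι] [DecidableEq ι] [CommRing R]
    (G : ι → α → R) (v : ι → α) {j k : ι} (hjk : j ≠ k) (hG : G j = G k) :
    ∑ σ : Equiv.Perm ι, ((Equiv.Perm.sign σ : ℤ) : R) * ∏ i, G i (v (σ i)) = 0 := by
  rw [← Matrix.det_zero_of_column_eq hjk (M := Matrix.of fun a i => G i (v a))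
    (fun a => by simp [hG]), Matrix.det_apply']
  rfl

/-- `hη` says `η = α ∧ a + β ∧ b + γ ∧ c` at `x`, i.e. `η ≡ 0 mod (a, b, c)`. -/
theorem wedge2111_eq_zero_of_congr_zero (η : E6 → E6 → E6 → ℝ) (a b c : E6 → E6 →L[ℝ] ℝ)
    (x : E6) (α β γ : E6 →L[ℝ] ℝ)
    (hη : ∀ v w, η x v w = (α v * a x w - α w * a x v) + (β v * b x w - β w * b x v) +
      (γ v * c x w - γ w * c x v))
    (v : Fin 5 → E6) : wedge2111 η a b c x v = 0 := by
  set alt : (Fin 5 → E6 → ℝ) → ℝ :=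
    fun G => ∑ σ : Equiv.Perm (Fin 5), ((Equiv.Perm.sign σ : ℤ) : ℝ) * ∏ i, G i (v (σ i))
    with alt_def
  have vanish (G : Fin 5 → E6 → ℝ) {j k : Fin 5} (hjk : j ≠ k) (hG : G j = G k) : alt G = 0 :=
    sum_sign_mul_prod_eq_zero_of_eq G v hjk hG
  calc wedge2111 η a b c x v
      = (alt ![α, a x, a x, b x, c x] - alt ![a x, α, a x, b x, c x])
        + (alt ![β, b x, a x, b x, c x] - alt ![b x, β, a x, b x, c x])
        + (alt ![γ, c x, a x, b x, c x] - alt ![c x, γ, a x, b x, c x]) := by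
        simp only [alt_def, wedge2111, hη, ← sum_sub_distrib, ← sum_add_distrib]
        refine sum_congr rfl fun σ _ => ?_
        simp only [Fin.prod_univ_five, Matrix.cons_val_zero, Matrix.cons_val_one,
          Matrix.cons_val_two, Matrix.cons_val_three, Matrix.cons_val_four, Matrix.head_cons,
          Matrix.tail_cons]
        ring
    _ = 0 := by
        rw [vanish _ (j := 1) (k := 2) (by decide) rfl, vanish _ (j := 0) (k := 2) (by decide) rfl,
          vanish _ (j := 1) (k := 3) (by decide) rfl, vanish _ (j := 0) (k := 3) (by decide) rfl,
          vanish _ (j := 1) (k := 4) (by decide) rfl, vanish _ (j := 0) (k := 4) (by decide) rfl]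
        ring

theorem hasFDerivAt_coord_div_coord {x : E6} (i j : Fin 6) (hx : x j ≠ 0) :
    HasFDerivAt (fun y : E6 => y i / y j) ((x j)⁻¹ • pr6 i - (x i / x j ^ 2) • pr6 j) x := by
  have hinv : HasFDerivAt (fun y : E6 => (y j)⁻¹) ((-(x j ^ 2)⁻¹) • pr6 j) x :=
    (hasDerivAt_inv hx).comp_hasFDerivAt x (pr6 j).hasFDerivAt
  refine ((pr6 i).hasFDerivAt.mul hinv).congr_fderiv ?_
  ext w
  simp only [pr6, ContinuousLinearMap.proj_apply, add_apply, smul_apply, sub_apply, smul_eq_mul]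
  field_simp
  ring

/-- The differential of `u¹/u²`. -/
def dRatio (x : E6) : E6 →L[ℝ] ℝ := (x 5)⁻¹ • pr6 4 - (x 4 / x 5 ^ 2) • pr6 5

theorem Φ_eq_combination {x : E6} (hx : x 5 ≠ 0) :
    Φ x = (-Real.cos (x 4 / x 5)) • ω01 x + (x 4 / x 5 * Real.cos (x 4 / x 5)) • ω02 x
      + x 5 • ω03 x := by
  ext w
  simp only [Φ, ω01, ω02, ω03, pr6, add_apply, smul_apply, sub_apply,
    ContinuousLinearMap.proj_apply, smul_eq_mul]
  field_simp
  ring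

theorem dOne_Φ {x : E6} (hx : x 5 ≠ 0) (v w : E6) :
    dOne Φ x v w =
      ((Real.sin (x 4 / x 5) • dRatio x) v * ω01 x w
          - (Real.sin (x 4 / x 5) • dRatio x) w * ω01 x v)
        + (((Real.cos (x 4 / x 5) - x 4 / x 5 * Real.sin (x 4 / x 5)) • dRatio x) v * ω02 x w
          - ((Real.cos (x 4 / x 5) - x 4 / x 5 * Real.sin (x 4 / x 5)) • dRatio x) w * ω02 x v)
        + (pr6 5 v * ω03 x w - pr6 5 w * ω03 x v) := by
  have hs := hasFDerivAt_coord_div_coord 4 5 hx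
  have hΦ : HasFDerivAt Φ _ x :=
    (hs.cos.smul ((hs.smul (hasFDerivAt_const (pr6 2) x)).sub (hasFDerivAt_const (pr6 1) x))).add
      ((pr6 5).hasFDerivAt.smul
        ((hasFDerivAt_const (pr6 3) x).sub (hs.sin.smul (hasFDerivAt_const (pr6 0) x))))
  rw [dOne, hΦ.fderiv]
  simp only [Fin.isValue, smul_zero, pr6, zero_add, sub_zero, Pi.sub_apply, Pi.smul_apply',
    ContinuousLinearMap.proj_apply, zero_sub, smul_neg, add_apply, smul_apply,
    ContinuousLinearMap.smulRight_apply, sub_apply, smul_eq_mul, neg_mul, neg_smul, neg_apply,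
    dRatio, ω01, ω02, ω03]
  field_simp
  ring

/-- On the domain `u² ≠ 0`, the form `Φ` lies in the first derived system of
`S₀ = span{ω₀¹, ω₀², ω₀³}`: it is a pointwise linear combination of the `ω₀ⁱ`
and `dΦ ∧ ω₀¹ ∧ ω₀² ∧ ω₀³ = 0`, i.e. `dΦ ≡ 0 mod S₀`. -/
theorem Phi_in_first_derived_system :
    ∀ x : E6, x 5 ≠ 0 →
      (∃ a b c : ℝ, Φ x = a • ω01 x + b • ω02 x + c • ω03 x) ∧
      (∀ v : Fin 5 → E6,
        wedge2111 (fun x' v' w' => dOne Φ x' v' w') ω01 ω02 ω03 x v = 0) :=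
  fun x hx => ⟨⟨_, _, _, Φ_eq_combination hx⟩,
    wedge2111_eq_zero_of_congr_zero _ _ _ _ x _ _ _ (dOne_Φ hx)⟩
end
end

section
/- Let the implicit triangular system Ξₑⁱ = 0, i = 1,…,n_b, be given by Ξₑⁱ : Σ_{k≤i} aₖⁱ(z¹,…,zⁱ,ẑ^{i+1})żᵏ - bⁱ(z¹,…,zⁱ,ẑ^{i+1}), with dim(Ξₑⁱ) = dim(ẑ^{i+1}) and the Jacobian ∂_{ẑ^{i+1}}Ξₑⁱ invertible everywhere, where zⁱ = (yⁱ, ẑⁱ). Then for any smooth choices of the curves y¹(t),…,y^{m-1}(t) (and suitable initial data), the remaining variables ẑ²(t),…,ẑᵐ(t) are determined locally uniquely by successive application of the implicit function theorem, and are smooth functions of the yⁱ and finitely many of their time derivatives; hence y = (y¹,…,y^{m-1}) is a flat output of the system. -/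
noncomputable section

open scoped BigOperators

/-- Configuration space: partitioned coordinates `z = (z¹,…,zᵐ)` with
`zⁱ = (yⁱ, ẑⁱ)`, `m = n_b + 1`; `ny j` and `nh j` are the dimensions of the
`y`- and `ẑ`-parts of the `j`-th block. -/
def Conf (nb : ℕ) (ny nh : Fin (nb + 1) → ℕ) : Type :=
  (j : Fin (nb + 1)) → (Fin (ny j) → ℝ) × (Fin (nh j) → ℝ)

instance (nb : ℕ) (ny nh : Fin (nb + 1) → ℕ) : NormedAddCommGroup (Conf nb ny nh) :=
  Pi.normedAddCommGroup

instance (nb : ℕ) (ny nh : Fin (nb + 1) → ℕ) : NormedSpace ℝ (Conf nb ny nh) :=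
  Pi.normedSpace

/-- The `i`-th block of the implicit triangular system:
`Ξᵢ(z, ż) = Σ_{k ≤ i} aₖⁱ(z)·żᵏ - bⁱ(z)`, with values in `ℝ^{dim ẑ^{i+1}}`. -/
def Xi {nb : ℕ} {ny nh : Fin (nb + 1) → ℕ}
    (A : (i : Fin nb) → (k : Fin (nb + 1)) → Conf nb ny nh →
      ((Fin (ny k) → ℝ) × (Fin (nh k) → ℝ)) →L[ℝ] (Fin (nh i.succ) → ℝ))
    (b : (i : Fin nb) → Conf nb ny nh → Fin (nh i.succ) → ℝ)
    (i : Fin nb) (Z Zd : Conf nb ny nh) : Fin (nh i.succ) → ℝ :=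
  (∑ k : Fin (nb + 1), if (k : ℕ) ≤ (i : ℕ) then A i k Z (Zd k) else 0) - b i Z

/-- Flatness of the implicit triangular form: if the coefficients `aₖⁱ`, `bⁱ`
of the blocks `Ξᵢ` depend only on `(z¹,…,zⁱ, ẑ^{i+1})`, are smooth, and the
Jacobians `∂_{ẑ^{i+1}} Ξᵢ` are invertible everywhere, then (with `z¹ = y¹` and
`zᵐ = ẑᵐ`) the trajectory of the system is locally uniquely determined by the
curves `yⁱ(t)` (and matching initial data): any two smooth solutions with the
same `y`-components that agree at `t₀` agree near `t₀`.  Hence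
`y = (y¹,…,y^{m-1})` is a flat output. -/
theorem triangular_form_flat_output {nb : ℕ} {ny nh : Fin (nb + 1) → ℕ}
    (hfirst : nh 0 = 0) (hlast : ny (Fin.last nb) = 0)
    (A : (i : Fin nb) → (k : Fin (nb + 1)) → Conf nb ny nh →
      ((Fin (ny k) → ℝ) × (Fin (nh k) → ℝ)) →L[ℝ] (Fin (nh i.succ) → ℝ))
    (b : (i : Fin nb) → Conf nb ny nh → Fin (nh i.succ) → ℝ)
    (hAsmooth : ∀ i k, ContDiff ℝ (⊤ : ℕ∞) (A i k))
    (hbsmooth : ∀ i, ContDiff ℝ (⊤ : ℕ∞) (b i))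
    -- the coefficients depend only on `(z¹,…,zⁱ, ẑ^{i+1})`:
    (hdep : ∀ (i : Fin nb) (Z Z' : Conf nb ny nh),
      (∀ j : Fin (nb + 1), (j : ℕ) ≤ (i : ℕ) → Z j = Z' j) →
      (Z i.succ).2 = (Z' i.succ).2 →
      (∀ k, A i k Z = A i k Z') ∧ b i Z = b i Z')
    -- invertibility of the Jacobian `∂_{ẑ^{i+1}} Ξᵢ` everywhere:
    (hJac : ∀ (i : Fin nb) (Z Zd : Conf nb ny nh),
      ∃ e : (Fin (nh i.succ) → ℝ) ≃L[ℝ] (Fin (nh i.succ) → ℝ),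
        (e : (Fin (nh i.succ) → ℝ) →L[ℝ] (Fin (nh i.succ) → ℝ)) =
          fderiv ℝ
            (fun h => Xi A b i (Function.update Z i.succ ((Z i.succ).1, h)) Zd)
            ((Z i.succ).2))
    -- two smooth solutions of the implicit system:
    (Z W : ℝ → Conf nb ny nh)
    (hZ : ContDiff ℝ (⊤ : ℕ∞) Z) (hW : ContDiff ℝ (⊤ : ℕ∞) W)
    (hZsol : ∀ t (i : Fin nb), Xi A b i (Z t) (deriv Z t) = 0)
    (hWsol : ∀ t (i : Fin nb), Xi A b i (W t) (deriv W t) = 0)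
    -- with the same `y`-curves:
    (hy : ∀ t (j : Fin (nb + 1)), (Z t j).1 = (W t j).1)
    -- and matching initial data at `t₀`:
    (t0 : ℝ) (h0 : Z t0 = W t0) :
    ∀ᶠ t in nhds t0, Z t = W t := by
  classical
  -- work at smoothness level ∞
  have hZ' : ContDiff ℝ (((⊤:ℕ∞)):WithTop ℕ∞) Z := hZ.of_le (by simp)
  have hW' : ContDiff ℝ (((⊤:ℕ∞)):WithTop ℕ∞) W := hW.of_le (by simp)
  have hone : (1 : WithTop ℕ∞) ≤ ((⊤:ℕ∞):WithTop ℕ∞) := by exact_mod_cast (le_top : (1:ℕ∞) ≤ ⊤)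
  -- componentwise derivatives
  have hZd : ∀ (t : ℝ) (k : Fin (nb+1)), deriv Z t k = deriv (fun s => Z s k) t := by
    intro t k
    have h1 : HasDerivAt Z (deriv Z t) t := (hZ'.differentiable (lt_of_lt_of_le zero_lt_one hone).ne' t).hasDerivAt
    have h2 : HasDerivAt (fun s => Z s k) (deriv Z t k) t :=
      ((ContinuousLinearMap.proj (R := ℝ)
        (φ := fun j : Fin (nb+1) => (Fin (ny j) → ℝ) × (Fin (nh j) → ℝ)) k).hasFDerivAt).comp_hasDerivAt t h1
    exact h2.deriv.symm
  have hWd : ∀ (t : ℝ) (k : Fin (nb+1)), deriv W t k = deriv (fun s => W s k) t := by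
    intro t k
    have h1 : HasDerivAt W (deriv W t) t := (hW'.differentiable (lt_of_lt_of_le zero_lt_one hone).ne' t).hasDerivAt
    have h2 : HasDerivAt (fun s => W s k) (deriv W t k) t :=
      ((ContinuousLinearMap.proj (R := ℝ)
        (φ := fun j : Fin (nb+1) => (Fin (ny j) → ℝ) × (Fin (nh j) → ℝ)) k).hasFDerivAt).comp_hasDerivAt t h1
    exact h2.deriv.symm
  have hderivZ : ContDiff ℝ (((⊤:ℕ∞)):WithTop ℕ∞) (deriv Z) := (contDiff_infty_iff_deriv.mp hZ').2
  have key : ∀ n : ℕ, ∀ᶠ t in nhds t0, ∀ j : Fin (nb+1), (j:ℕ) ≤ n → Z t j = W t j := by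
    intro n
    induction n with
    | zero =>
      refine Filter.Eventually.of_forall fun t j hj => ?_
      have hj0 : j = 0 := Fin.ext (by simp only [Fin.val_zero]; omega)
      subst hj0
      refine Prod.ext (hy t 0) ?_
      funext x
      exact (Fin.cast hfirst x).elim0
    | succ n IH =>
      by_cases hn : n + 1 ≤ nb
      swap
      · filter_upwards [IH] with t ht j hj
        exact ht j (le_trans j.is_le (by omega))
      · set i : Fin nb := ⟨n, by omega⟩ with hi
        obtain ⟨U, hUall, hUo, hU0⟩ := eventually_nhds_iff.mp IH
        set h₀ : Fin (nh i.succ) → ℝ := (Z t0 i.succ).2 with hh₀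
        set g : ℝ × (Fin (nh i.succ) → ℝ) → (Fin (nh i.succ) → ℝ) := fun p =>
          Xi A b i (Function.update (Z p.1) i.succ ((Z p.1 i.succ).1, p.2)) (deriv Z p.1) with hg
        -- smoothness of the updated configuration map
        have hPsmooth : ContDiff ℝ (((⊤:ℕ∞)):WithTop ℕ∞)
            (fun p : ℝ × (Fin (nh i.succ) → ℝ) =>
              Function.update (Z p.1) i.succ ((Z p.1 i.succ).1, p.2)) := by
          rw [contDiff_pi]
          intro j
          by_cases hj : j = i.succ
          · subst hj
            convert (((contDiff_pi.mp hZ' i.succ).comp contDiff_fst).fst).prodMk contDiff_snd using 1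
            funext x
            exact Function.update_self _ _ _
          · convert (contDiff_pi.mp hZ' j).comp contDiff_fst using 1
            funext x
            exact Function.update_of_ne hj _ _
        have hgsmooth : ContDiff ℝ (((⊤:ℕ∞)):WithTop ℕ∞) g := by
          rw [hg]
          show ContDiff ℝ (((⊤:ℕ∞)):WithTop ℕ∞) fun p : ℝ × (Fin (nh i.succ) → ℝ) =>
            (∑ k : Fin (nb + 1), if (k : ℕ) ≤ (i : ℕ) then
              A i k (Function.update (Z p.1) i.succ ((Z p.1 i.succ).1, p.2)) (deriv Z p.1 k) else 0)
            - b i (Function.update (Z p.1) i.succ ((Z p.1 i.succ).1, p.2))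
          refine ContDiff.sub ?_ (((hbsmooth i).of_le (by simp)).comp hPsmooth)
          refine ContDiff.sum fun k _ => ?_
          by_cases hk : (k:ℕ) ≤ (i:ℕ)
          · simp only [if_pos hk]
            exact (((hAsmooth i k).of_le (by simp)).comp hPsmooth).clm_apply
              ((contDiff_pi.mp hderivZ k).comp contDiff_fst)
          · simp only [if_neg hk]
            exact contDiff_const
        set Dg : (ℝ × (Fin (nh i.succ) → ℝ)) →L[ℝ] (Fin (nh i.succ) → ℝ) :=
          fderiv ℝ g (t0, h₀) with hDg
        have hgstrict : HasStrictFDerivAt g Dg (t0, h₀) := hgsmooth.hasStrictFDerivAt (lt_of_lt_of_le zero_lt_one hone).ne'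
        obtain ⟨e, he⟩ := hJac i (Z t0) (deriv Z t0)
        have hcomp : HasFDerivAt (fun h => g (t0, h))
            (Dg.comp (ContinuousLinearMap.inr ℝ ℝ (Fin (nh i.succ) → ℝ))) h₀ :=
          hgstrict.hasFDerivAt.comp h₀ (hasFDerivAt_prodMk_right t0 h₀)
        have heDg : (e : (Fin (nh i.succ) → ℝ) →L[ℝ] (Fin (nh i.succ) → ℝ)) =
            Dg.comp (ContinuousLinearMap.inr ℝ ℝ (Fin (nh i.succ) → ℝ)) := by
          rw [he]
          exact hcomp.fderiv
        have hDapply : ∀ dh, e dh = Dg (0, dh) := by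
          intro dh
          have := congrArg (fun f : (Fin (nh i.succ) → ℝ) →L[ℝ] (Fin (nh i.succ) → ℝ) => f dh) heDg
          simpa using this
        -- the full derivative of G = (t, g) as an equivalence
        set Dfull : (ℝ × (Fin (nh i.succ) → ℝ)) →L[ℝ] (ℝ × (Fin (nh i.succ) → ℝ)) :=
          (ContinuousLinearMap.fst ℝ ℝ (Fin (nh i.succ) → ℝ)).prod Dg with hDfull
        set Dinv : (ℝ × (Fin (nh i.succ) → ℝ)) →L[ℝ] (ℝ × (Fin (nh i.succ) → ℝ)) :=
          (ContinuousLinearMap.fst ℝ ℝ (Fin (nh i.succ) → ℝ)).prod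
            ((e.symm : (Fin (nh i.succ) → ℝ) →L[ℝ] (Fin (nh i.succ) → ℝ)).comp
              ((ContinuousLinearMap.snd ℝ ℝ (Fin (nh i.succ) → ℝ)) -
                Dg.comp ((ContinuousLinearMap.inl ℝ ℝ (Fin (nh i.succ) → ℝ)).comp
                  (ContinuousLinearMap.fst ℝ ℝ (Fin (nh i.succ) → ℝ))))) with hDinv
        have hsplit : ∀ (dt : ℝ) (dh : Fin (nh i.succ) → ℝ),
            Dg (dt, dh) = Dg (dt, 0) + e dh := by
          intro dt dh
          rw [hDapply, ← map_add]
          congr 1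
          simp [Prod.mk_add_mk]
        have hleft : Function.LeftInverse Dinv Dfull := by
          intro x
          obtain ⟨dt, dh⟩ := x
          simp only [hDfull, hDinv, ContinuousLinearMap.prod_apply, ContinuousLinearMap.coe_comp',
            Function.comp_apply, ContinuousLinearMap.coe_fst', ContinuousLinearMap.coe_snd',
            ContinuousLinearMap.sub_apply, ContinuousLinearMap.inl_apply]
          refine Prod.ext rfl ?_
          show e.symm (Dg (dt, dh) - Dg (dt, 0)) = dh
          rw [hsplit dt dh]
          simp
        have hright : Function.RightInverse Dinv Dfull := by
          intro y
          obtain ⟨ds, dk⟩ := y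
          simp only [hDfull, hDinv, ContinuousLinearMap.prod_apply, ContinuousLinearMap.coe_comp',
            Function.comp_apply, ContinuousLinearMap.coe_fst', ContinuousLinearMap.coe_snd',
            ContinuousLinearMap.sub_apply, ContinuousLinearMap.inl_apply]
          refine Prod.ext rfl ?_
          show Dg (ds, e.symm (dk - Dg (ds, 0))) = dk
          rw [hsplit ds (e.symm (dk - Dg (ds, 0)))]
          simp
        set D : (ℝ × (Fin (nh i.succ) → ℝ)) ≃L[ℝ] (ℝ × (Fin (nh i.succ) → ℝ)) :=
          ContinuousLinearEquiv.equivOfInverse Dfull Dinv hleft hright with hD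
        have hGstrict : HasStrictFDerivAt (fun p : ℝ × (Fin (nh i.succ) → ℝ) => (p.1, g p))
            (D : (ℝ × (Fin (nh i.succ) → ℝ)) →L[ℝ] (ℝ × (Fin (nh i.succ) → ℝ))) (t0, h₀) := by
          have : (D : (ℝ × (Fin (nh i.succ) → ℝ)) →L[ℝ] (ℝ × (Fin (nh i.succ) → ℝ))) = Dfull := rfl
          rw [this, hDfull]
          exact hasStrictFDerivAt_fst.prodMk hgstrict
        set φ := hGstrict.toOpenPartialHomeomorph _ with hφ
        have hmem : (t0, h₀) ∈ φ.source := hGstrict.mem_toOpenPartialHomeomorph_source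
        have hopen : IsOpen φ.source := φ.open_source
        -- eventual membership in the source
        have hcontZ : ContinuousAt (fun t => (t, (Z t i.succ).2)) t0 :=
          (continuous_id.prodMk (continuous_snd.comp
            ((continuous_apply i.succ).comp (hZ'.continuous)))).continuousAt
        have hcontW : ContinuousAt (fun t => (t, (W t i.succ).2)) t0 :=
          (continuous_id.prodMk (continuous_snd.comp
            ((continuous_apply i.succ).comp (hW'.continuous)))).continuousAt
        have hmemZ : ∀ᶠ t in nhds t0, (t, (Z t i.succ).2) ∈ φ.source :=
          hcontZ.preimage_mem_nhds (hopen.mem_nhds hmem)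
        have hmemW : ∀ᶠ t in nhds t0, (t, (W t i.succ).2) ∈ φ.source := by
          have hW0 : ((t0, (W t0 i.succ).2) : ℝ × (Fin (nh i.succ) → ℝ)) = (t0, h₀) := by
            rw [hh₀, h0]
          refine hcontW.preimage_mem_nhds ?_
          rw [show nhds ((t0, (W t0 i.succ).2) : ℝ × (Fin (nh i.succ) → ℝ)) = nhds (t0, h₀) from by rw [hW0]]
          exact hopen.mem_nhds hmem
        -- derivatives agree on U for low blocks
        have hderiv_eq : ∀ t ∈ U, ∀ k : Fin (nb+1), (k:ℕ) ≤ n → deriv Z t k = deriv W t k := by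
          intro t ht k hk
          rw [hZd t k, hWd t k]
          apply Filter.EventuallyEq.deriv_eq
          filter_upwards [hUo.mem_nhds ht] with s hs
          rw [hUall s hs k hk]
        -- the Z-solution is a zero of g
        have hE1 : ∀ t : ℝ, g (t, (Z t i.succ).2) = 0 := by
          intro t
          have hupd : Function.update (Z t) i.succ ((Z t i.succ).1, (Z t i.succ).2) = Z t :=
            Function.update_eq_self i.succ (Z t)
          show Xi A b i (Function.update (Z t) i.succ ((Z t i.succ).1, (Z t i.succ).2)) (deriv Z t) = 0
          rw [hupd]
          exact hZsol t i
        -- the W-solution's hat-component is also a zero of g, on U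
        have hE2 : ∀ t ∈ U, g (t, (W t i.succ).2) = 0 := by
          intro t ht
          set P : Conf nb ny nh :=
            Function.update (Z t) i.succ ((Z t i.succ).1, (W t i.succ).2) with hPdef
          have hP : ∀ j : Fin (nb+1), (j:ℕ) ≤ (i:ℕ) → P j = W t j := by
            intro j hj
            have hjne : j ≠ i.succ := by
              intro hje
              rw [hje] at hj
              simp only [Fin.val_succ] at hj
              omega
            rw [hPdef]
            exact (Function.update_of_ne hjne _ _).trans (hUall t ht j hj)
          have hhat : (P i.succ).2 = (W t i.succ).2 := by
            rw [hPdef]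
            exact (congrArg Prod.snd (Function.update_self i.succ ((Z t i.succ).1, (W t i.succ).2) (Z t)) :)
          obtain ⟨hAeq, hbeq⟩ := hdep i P (W t) hP hhat
          have hsum : (∑ k : Fin (nb+1), if (k:ℕ) ≤ (i:ℕ) then A i k P (deriv Z t k) else 0)
              = ∑ k : Fin (nb+1), if (k:ℕ) ≤ (i:ℕ) then A i k (W t) (deriv W t k) else 0 := by
            refine Finset.sum_congr rfl fun k _ => ?_
            by_cases hk : (k:ℕ) ≤ (i:ℕ)
            · rw [if_pos hk, if_pos hk, hAeq k, hderiv_eq t ht k hk]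
            · rw [if_neg hk, if_neg hk]
          show Xi A b i P (deriv Z t) = 0
          rw [Xi, hsum, hbeq]
          have h2 := hWsol t i
          rw [Xi] at h2
          exact h2
        -- local injectivity yields agreement of the hat components
        have hEv : ∀ᶠ t in nhds t0, Z t i.succ = W t i.succ := by
          filter_upwards [hmemZ, hmemW, hUo.mem_nhds hU0] with t htZ htW htU
          have hGeq : (φ : ℝ × (Fin (nh i.succ) → ℝ) → ℝ × (Fin (nh i.succ) → ℝ))
                (t, (Z t i.succ).2)
              = (φ : ℝ × (Fin (nh i.succ) → ℝ) → ℝ × (Fin (nh i.succ) → ℝ))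
                (t, (W t i.succ).2) := by
            show ((t, (Z t i.succ).2).1, g (t, (Z t i.succ).2))
              = ((t, (W t i.succ).2).1, g (t, (W t i.succ).2))
            rw [hE1 t, hE2 t htU]
          have heq := φ.injOn htZ htW hGeq
          have hsnd := congrArg Prod.snd heq
          exact Prod.ext (hy t i.succ) hsnd
        filter_upwards [IH, hEv] with t h1 h2 j hj
        by_cases hjn : (j:ℕ) ≤ n
        · exact h1 j hjn
        · have hji : j = i.succ := Fin.ext (by have hin : (i:ℕ) = n := rfl; simp only [Fin.val_succ]; omega)
          rw [hji]
          exact h2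
  filter_upwards [key nb] with t ht
  funext j
  exact ht j j.is_le
end
end

section
/- On ℝ⁶ with coordinates (t,x¹,x²,x³,u¹,u²), u² ≠ 0, consider S₁ = span{Φ, ω₀² - (u²/u¹)ω₀¹} where Φ = cos(u¹/u²)((u¹/u²)dx² - dx¹) + u²(dx³ - sin(u¹/u²)dt), ω₀¹ = dx¹ - u¹dt, ω₀² = dx² - u²dt, and u¹ ≠ 0. Then the vector field v₀ = u¹∂_{u¹} + u²∂_{u²} satisfies ((v₀⌟dΦ)) ∧ (ω₀² - (u²/u¹)ω₀¹) ∧ Φ = 0, i.e. v₀⌟dΦ lies in the span of the two generators of S₁. -/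
noncomputable section

open scoped BigOperators

/-- The second generator of `S₁`: `ω₀² - (u²/u¹)ω₀¹`. -/
def ω12' : E6 → E6 →L[ℝ] ℝ := fun x => ω02 x - (x 5 / x 4) • ω01 x

/-- `v₀ = u¹∂_{u¹} + u²∂_{u²}`. -/
def v0 : E6 → E6 := fun x => Pi.single 4 (x 4) + Pi.single 5 (x 5)

/-- Wedge of three covectors (as functions) evaluated on three vectors. -/
def wedge3 (f g h : E6 → ℝ) (v : Fin 3 → E6) : ℝ :=
  ∑ σ : Equiv.Perm (Fin 3), ((Equiv.Perm.sign σ : ℤ) : ℝ) *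
    f (v (σ 0)) * g (v (σ 1)) * h (v (σ 2))

/-! Write `s = u¹/u²`. As `s` is homogeneous of degree `0` in `(u¹, u²)` and `v₀` is the Euler
field of these variables, `v₀⌟ds = 0`; and `Φ` has no `du` component, so `v₀⌟Φ = 0`. Hence
`v₀⌟dΦ = L_{v₀}Φ = u²(dx³ - sin s dt)`, which is `Φ - s cos s (ω₀² - (u²/u¹)ω₀¹)`. -/

lemma wedge3_eq_det (f g h : E6 → ℝ) (v : Fin 3 → E6) :
    wedge3 f g h v = (Matrix.of fun j i : Fin 3 => ![f, g, h] i (v j)).det := by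
  rw [Matrix.det_apply, wedge3]
  refine Finset.sum_congr rfl fun σ _ => ?_
  rw [Fin.prod_univ_three]
  simp only [Matrix.of_apply, Matrix.cons_val_zero, Matrix.cons_val_one, Matrix.cons_val,
    Units.smul_def, zsmul_eq_mul]
  ring

lemma wedge3_eq_zero_of_eq_linear_combination {f g h : E6 → ℝ} {a b : ℝ}
    (hf : ∀ w, f w = a * g w + b * h w) (v : Fin 3 → E6) : wedge3 f g h v = 0 := by
  rw [wedge3_eq_det, Matrix.det_fin_three]
  simp only [Matrix.of_apply, Matrix.cons_val_zero, Matrix.cons_val_one, Matrix.cons_val, hf]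
  ring

lemma fderiv_apply_eq_zero_of_forall_apply_eq_zero {E F : Type*} [NormedAddCommGroup E]
    [NormedSpace ℝ E] [NormedAddCommGroup F] [NormedSpace ℝ F] {ω : E → E →L[ℝ] F} {x v : E}
    (hω : DifferentiableAt ℝ ω x) (hv : ∀ y, ω y v = 0) (w : E) : fderiv ℝ ω x w v = 0 := by
  have h := fderiv_clm_apply hω (differentiableAt_const v)
  simp only [hv, fderiv_const_apply, ContinuousLinearMap.comp_zero, zero_add] at h
  simpa using congrArg (· w) h.symm

section DivApply

variable {ι : Type*} [Fintype ι] {x : ι → ℝ}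

local notation "π" => ContinuousLinearMap.proj (R := ℝ) (φ := fun _ : ι => ℝ)

lemma hasFDerivAt_apply_div_apply (i j : ι) (hx : x j ≠ 0) :
    HasFDerivAt (fun y : ι → ℝ => y i / y j) ((x j)⁻¹ • π i - (x i / x j ^ 2) • π j) x := by
  have h := (π i).hasFDerivAt.mul ((hasFDerivAt_inv hx).comp x (π j).hasFDerivAt)
  simp only [div_eq_mul_inv]
  refine h.congr_fderiv ?_
  ext w
  simp only [add_apply, smul_apply, sub_apply, ContinuousLinearMap.comp_apply,
    ContinuousLinearMap.toSpanSingleton_apply, ContinuousLinearMap.proj_apply, Function.comp_apply,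
    smul_eq_mul]
  ring

lemma fderiv_apply_div_apply_single_add_single [DecidableEq ι] {i j : ι} (hij : i ≠ j)
    (hx : x j ≠ 0) :
    fderiv ℝ (fun y : ι → ℝ => y i / y j) x (Pi.single i (x i) + Pi.single j (x j)) = 0 := by
  rw [(hasFDerivAt_apply_div_apply i j hx).fderiv]
  simp only [sub_apply, smul_apply, ContinuousLinearMap.proj_apply, Pi.add_apply,
    Pi.single_eq_same, Pi.single_eq_of_ne hij, Pi.single_eq_of_ne hij.symm, smul_eq_mul]
  field_simp
  ring

end DivApply

lemma Φ_apply_v0 (x y : E6) : Φ y (v0 x) = 0 := by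
  simp [Φ, v0, pr6]

lemma differentiableAt_Φ {x : E6} (h5 : x 5 ≠ 0) : DifferentiableAt ℝ Φ x := by
  unfold Φ pr6
  fun_prop (disch := assumption)

lemma fderiv_Φ_apply_v0 {x : E6} (h5 : x 5 ≠ 0) :
    fderiv ℝ Φ x (v0 x) = x 5 • (pr6 3 - Real.sin (x 4 / x 5) • pr6 0) := by
  have hs := hasFDerivAt_apply_div_apply 4 5 h5
  have hA := hs.cos.smul ((hs.smul_const (pr6 2)).sub (hasFDerivAt_const (pr6 1) x))
  have hB := ((pr6 5).hasFDerivAt (x := x)).smul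
      ((hasFDerivAt_const (pr6 3) x).sub (hs.sin.smul_const (pr6 0)))
  have hΦ : HasFDerivAt Φ _ x := hA.add hB
  have euler := fderiv_apply_div_apply_single_add_single (by decide : (4 : Fin 6) ≠ 5) h5
  rw [hs.fderiv] at euler
  rw [hΦ.fderiv]
  simp only [add_apply, smul_apply, sub_apply, ContinuousLinearMap.smulRight_apply,
    zero_apply, v0, euler]
  simp [pr6]

lemma div_smul_ω12' {x : E6} (h4 : x 4 ≠ 0) (h5 : x 5 ≠ 0) :
    (x 4 / x 5) • ω12' x = (x 4 / x 5) • pr6 2 - pr6 1 := by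
  ext w
  simp only [ω12', ω02, ω01, pr6, smul_apply, sub_apply, ContinuousLinearMap.proj_apply,
    smul_eq_mul]
  field_simp
  ring

lemma dOne_Φ_v0 {x : E6} (h4 : x 4 ≠ 0) (h5 : x 5 ≠ 0) (w : E6) :
    dOne Φ x (v0 x) w = -(x 4 / x 5 * Real.cos (x 4 / x 5)) * ω12' x w + 1 * Φ x w := by
  have hs := congrArg (· w) (div_smul_ω12' h4 h5)
  simp only [smul_apply, sub_apply, smul_eq_mul] at hs
  rw [dOne, fderiv_Φ_apply_v0 h5,
    fderiv_apply_eq_zero_of_forall_apply_eq_zero (differentiableAt_Φ h5) (Φ_apply_v0 x) w]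
  simp only [Φ, add_apply, smul_apply, sub_apply, smul_eq_mul]
  linear_combination Real.cos (x 4 / x 5) * hs

/-- On `u¹ ≠ 0`, `u² ≠ 0` one has
`(v₀⌟dΦ) ∧ (ω₀² - (u²/u¹)ω₀¹) ∧ Φ = 0`, i.e. `v₀⌟dΦ` lies pointwise in the
span of the two generators of `S₁ = span{Φ, ω₀² - (u²/u¹)ω₀¹}`. -/
theorem v0_contraction_in_S1 :
    ∀ x : E6, x 4 ≠ 0 → x 5 ≠ 0 →
      (∀ v : Fin 3 → E6,
        wedge3 (fun w => dOne Φ x (v0 x) w) (⇑(ω12' x)) (⇑(Φ x)) v = 0) ∧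
      (∃ a b : ℝ, ∀ w : E6,
        dOne Φ x (v0 x) w = a * ω12' x w + b * Φ x w) := by
  intro x h4 h5
  exact ⟨wedge3_eq_zero_of_eq_linear_combination (dOne_Φ_v0 h4 h5), _, _, dOne_Φ_v0 h4 h5⟩
end
end
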